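/- Let G be a group acting on a set X and μ a finitely additive probability measure on X. For a subset A ⊆ X, numbers 0 < δ ≤ ε < sup_{x∈G}(λ*μ)(xA) where λ is a finitely additive probability measure on G, set M_δ = {x ∈ G : μ(xA) > δ}. Then for any g with (λ*μ)(gA) > ε, one has λ(gM_δ⁻¹) > (ε − δ)/(sup_{x∈G}μ(xA) − δ). -/
import Mathlib


open Pointwise

/-- A finitely additive probability measure on a set `X`. -/
structure FAMeasure (X : Type*) where
  m : Set X → ℝ
  nonneg : ∀ A : Set X, 0 ≤ m A
  total : m Set.univ = 1
  additive : ∀ A B : Set X, Disjoint A B → m (A ∪ B) = m A + m B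

/-- A Boolean ideal: a proper family of subsets closed under subsets and finite unions. -/
def IsBoolIdeal {X : Type*} (I : Set (Set X)) : Prop :=
  Set.univ ∉ I ∧ (∀ A ∈ I, ∀ B ⊆ A, B ∈ I) ∧ (∀ A ∈ I, ∀ B ∈ I, A ∪ B ∈ I)

/-- The `I`-difference set `Δ_I(A) = {g : gA ∩ A ∉ I}`. -/
def Delta (G : Type*) {X : Type*} [Group G] [MulAction G X] (I : Set (Set X)) (A : Set X) : Set G :=
  {g : G | g • A ∩ A ∉ I}

/-- `cov(B) ≤ n`: `B` can be covered by at most `n` left translates. -/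
def covLE {G : Type*} [Group G] (B : Set G) (n : ℕ) : Prop :=
  ∃ F : Finset G, F.card ≤ n ∧ (F : Set G) * B = Set.univ

/-- `cov(B) < n`. -/
def covLT {G : Type*} [Group G] (B : Set G) (n : ℕ) : Prop :=
  ∃ F : Finset G, F.card < n ∧ (F : Set G) * B = Set.univ

/-- Lower Darboux integral of a function against a finitely additive measure. -/
noncomputable def FAMeasure.lintegral {X : Type*} (μ : FAMeasure X) (f : X → ℝ) : ℝ :=
  sSup { r : ℝ | ∃ (n : ℕ) (c : Fin n → ℝ) (B : Fin n → Set X),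
    (Pairwise fun i j => Disjoint (B i) (B j)) ∧ (⋃ i, B i) = Set.univ ∧
    (∀ i, ∀ x ∈ B i, c i ≤ f x) ∧ r = ∑ i, c i * μ.m (B i) }

/-- Convolution `λ*μ` of a finitely additive measure on `G` with one on a `G`-space `X`. -/
noncomputable def conv {G X : Type*} [Group G] [MulAction G X]
    (lam : FAMeasure G) (mu : FAMeasure X) (B : Set X) : ℝ :=
  lam.lintegral (fun x => mu.m (x⁻¹ • B))

namespace FAMeasure

variable {X : Type*} (μ : FAMeasure X)

theorem m_empty : μ.m ∅ = 0 := by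
  have h := μ.additive ∅ ∅ disjoint_bot_left
  simp at h
  linarith

theorem m_mono {A B : Set X} (h : A ⊆ B) : μ.m A ≤ μ.m B := by
  have h2 := μ.additive A (B \ A) disjoint_sdiff_self_right
  rw [Set.union_diff_cancel h] at h2
  have := μ.nonneg (B \ A); linarith

theorem m_le_one (A : Set X) : μ.m A ≤ 1 := μ.total ▸ μ.m_mono (Set.subset_univ A)

theorem m_iUnion (n : ℕ) (B : Fin n → Set X)
    (h : Pairwise fun i j => Disjoint (B i) (B j)) : μ.m (⋃ i, B i) = ∑ i, μ.m (B i) := by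
  induction n with
  | zero => simp [m_empty]
  | succ n ih =>
      have hU : (⋃ i, B i) = (⋃ i : Fin n, B i.castSucc) ∪ B (Fin.last n) := by
        ext x
        simp only [Set.mem_iUnion, Set.mem_union]
        constructor
        · rintro ⟨i, hi⟩
          rcases Fin.eq_castSucc_or_eq_last i with ⟨j, rfl⟩ | rfl
          · exact Or.inl ⟨j, hi⟩
          · exact Or.inr hi
        · rintro (⟨j, hj⟩ | hl)
          · exact ⟨j.castSucc, hj⟩
          · exact ⟨Fin.last n, hl⟩
      have hdisj : Disjoint (⋃ i : Fin n, B i.castSucc) (B (Fin.last n)) := by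
        apply Set.disjoint_iUnion_left.2
        intro i
        exact h (Fin.castSucc_lt_last i).ne
      rw [hU, μ.additive _ _ hdisj, Fin.sum_univ_castSucc,
        ih (fun i => B i.castSucc) (fun i j hij => h (by simpa using hij))]

theorem lintegral_le_of {G : Type*} (lam : FAMeasure G) (f : G → ℝ) (S : Set G) (a b : ℝ)
    (ha : 0 ≤ a) (hab : a ≤ b) (hb : ∀ x, f x ≤ b) (hS : ∀ x ∉ S, f x ≤ a) :
    lam.lintegral f ≤ a + (b - a) * lam.m S := by
  classical
  apply Real.sSup_le
  · rintro r ⟨n, c, B, hdisj, hcover, hle, rfl⟩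
    set B' : Fin n → Set G := fun i => if B i ⊆ S then B i else ∅ with hB'
    have hB'sub : ∀ i, B' i ⊆ B i := by
      intro i; simp only [hB']; split <;> simp
    have hB'S : ∀ i, B' i ⊆ S := by
      intro i; simp only [hB']; split
      · assumption
      · simp
    have hstep : ∀ i, c i * lam.m (B i) ≤ a * lam.m (B i) + (b - a) * lam.m (B' i) := by
      intro i
      by_cases hne : (B i).Nonempty
      · by_cases hsub : B i ⊆ S
        · have hc : c i ≤ b := le_trans (hle i hne.choose hne.choose_spec) (hb _)
          have : B' i = B i := if_pos hsub
          rw [this]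
          nlinarith [lam.nonneg (B i)]
        · obtain ⟨x, hx, hxS⟩ := Set.not_subset.1 hsub
          have hc : c i ≤ a := le_trans (hle i x hx) (hS x hxS)
          have : B' i = ∅ := if_neg hsub
          rw [this, lam.m_empty]
          nlinarith [lam.nonneg (B i)]
      · rw [Set.not_nonempty_iff_eq_empty] at hne
        have : B' i = ∅ := by simp [hB', hne]
        rw [this, hne, lam.m_empty]
        simp
    calc ∑ i, c i * lam.m (B i)
        ≤ ∑ i, (a * lam.m (B i) + (b - a) * lam.m (B' i)) :=
          Finset.sum_le_sum fun i _ => hstep i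
      _ = a * ∑ i, lam.m (B i) + (b - a) * ∑ i, lam.m (B' i) := by
          rw [Finset.sum_add_distrib, Finset.mul_sum, Finset.mul_sum]
      _ ≤ a + (b - a) * lam.m S := by
          have h1 : ∑ i, lam.m (B i) = 1 := by
            rw [← lam.m_iUnion n B hdisj, hcover, lam.total]
          have hdisj' : Pairwise fun i j => Disjoint (B' i) (B' j) :=
            fun i j hij => (hdisj hij).mono (hB'sub i) (hB'sub j)
          have h2 : ∑ i, lam.m (B' i) ≤ lam.m S := by
            rw [← lam.m_iUnion n B' hdisj']
            exact lam.m_mono (Set.iUnion_subset hB'S)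
          rw [h1]
          nlinarith
  · nlinarith [lam.nonneg S]

end FAMeasure

theorem stmt14 {G X : Type*} [Group G] [MulAction G X]
    (μ : FAMeasure X) (lam : FAMeasure G) (A : Set X) (δ ε : ℝ)
    (hδ : 0 < δ) (hδε : δ ≤ ε) (hε : ε < ⨆ x : G, conv lam μ (x • A)) (g : G)
    (hg : ε < conv lam μ (g • A)) :
    (ε - δ) / ((⨆ x : G, μ.m (x • A)) - δ) <
      lam.m (g • ({x : G | δ < μ.m (x • A)})⁻¹) := by
  classical
  set s := ⨆ x : G, μ.m (x • A) with hs
  have hbdd : BddAbove (Set.range fun x : G => μ.m (x • A)) :=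
    ⟨1, by rintro _ ⟨y, rfl⟩; exact μ.m_le_one (y • A)⟩
  have hsle : ∀ x : G, μ.m (x • A) ≤ s := fun x => le_ciSup hbdd x
  have hs0 : 0 ≤ s := (μ.nonneg _).trans (hsle 1)
  have hconv_le : ∀ x : G, conv lam μ (x • A) ≤ s := by
    intro x
    have h := FAMeasure.lintegral_le_of lam (fun y => μ.m (y⁻¹ • x • A)) Set.univ 0 s le_rfl hs0
      (fun y => by show μ.m (y⁻¹ • x • A) ≤ s; rw [smul_smul]; exact hsle _)
      (fun y hy => absurd (Set.mem_univ y) hy)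
    rw [lam.total] at h
    calc conv lam μ (x • A) = lam.lintegral (fun y => μ.m (y⁻¹ • x • A)) := rfl
      _ ≤ 0 + (s - 0) * 1 := h
      _ = s := by ring
  obtain ⟨x, hx⟩ := exists_lt_of_lt_ciSup hε
  have hεs : ε < s := hx.trans_le (hconv_le x)
  have hδs : δ < s := lt_of_le_of_lt hδε hεs
  set S := g • ({x : G | δ < μ.m (x • A)})⁻¹ with hS
  have hmem : ∀ y : G, y ∈ S ↔ δ < μ.m ((y⁻¹ * g) • A) := by
    intro y
    simp [hS, Set.mem_smul_set_iff_inv_smul_mem, smul_eq_mul, Set.mem_inv,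
      mul_inv_rev, Set.mem_setOf_eq]
  have key := FAMeasure.lintegral_le_of lam (fun y => μ.m (y⁻¹ • g • A)) S δ s hδ.le hδs.le
    (fun y => by show μ.m (y⁻¹ • g • A) ≤ s; rw [smul_smul]; exact hsle _)
    (fun y hy => by
      show μ.m (y⁻¹ • g • A) ≤ δ
      rw [smul_smul]
      exact le_of_not_gt (fun hlt => hy ((hmem y).2 hlt)))
  have hkey : ε < δ + (s - δ) * lam.m S := lt_of_lt_of_le hg key
  rw [div_lt_iff₀ (by linarith : (0:ℝ) < s - δ)]
  nlinarith
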